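/- arXiv:2307.09663 — 2 statements merged into one kernel-verified Lean document; each statement's English description precedes it below -/
import Mathlib

section
/- Let G be a simple graph on n vertices with a clique partition F = {C_1, ..., C_k}, where |C_i| = s_i^F and s_1^F ≥ s_2^F ≥ ... ≥ s_k^F. Then the smallest adjacency eigenvalue of the clique partition graph satisfies λ_k(P_G) ≥ −s_1^F. Moreover, if all cliques of F have the same size s_1^F (G is s_1^F clique-uniform) and k > n, then λ_k(P_G) = −s_1^F. -/
open Matrix Finset

/-- A clique partition of `G`: each member is a clique and every edge of `G`
lies in exactly one member. -/
def IsCliquePartition {n k : ℕ} (G : SimpleGraph (Fin n)) (F : Fin k → Finset (Fin n)) : Prop :=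
  (∀ j, G.IsClique ↑(F j)) ∧ ∀ ⦃u v : Fin n⦄, G.Adj u v → ∃! j, u ∈ F j ∧ v ∈ F j

/-- The vertex-clique incidence matrix of the family `F`. -/
def vcMat {n k : ℕ} (F : Fin k → Finset (Fin n)) : Matrix (Fin n) (Fin k) ℝ :=
  fun i j => if i ∈ F j then 1 else 0

/-- The clique-degree of vertex `i`: the number of members of `F` containing `i`. -/
def cliqueDeg {n k : ℕ} (F : Fin k → Finset (Fin n)) (i : Fin n) : ℕ :=
  (Finset.univ.filter fun j => i ∈ F j).card

/-- The adjacency matrix of the clique partition graph `P_G`: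
two distinct members of `F` are adjacent iff they share a vertex. -/
def pgMat {n k : ℕ} (F : Fin k → Finset (Fin n)) : Matrix (Fin k) (Fin k) ℝ :=
  fun j l => if j ≠ l ∧ (F j ∩ F l).Nonempty then 1 else 0

/-- The `i`-th largest eigenvalue (0-based) of a real symmetric matrix. -/
noncomputable def eigsDesc {N : ℕ} (A : Matrix (Fin N) (Fin N) ℝ) : Fin N → ℝ :=
  fun i => if hA : A.IsHermitian then (hA.eigenvalues ∘ Tuple.sort hA.eigenvalues) i.rev else 0

/-- The number of negative eigenvalues (with multiplicity) of a real symmetric matrix. -/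
noncomputable def negInertia {m : Type*} [Fintype m] [DecidableEq m] (A : Matrix m m ℝ) : ℕ :=
  if hA : A.IsHermitian then (Finset.univ.filter fun i => hA.eigenvalues i < 0).card else 0

/-- The number of positive eigenvalues (with multiplicity) of a real symmetric matrix. -/
noncomputable def posInertia {m : Type*} [Fintype m] [DecidableEq m] (A : Matrix m m ℝ) : ℕ :=
  if hA : A.IsHermitian then (Finset.univ.filter fun i => 0 < hA.eigenvalues i).card else 0

/-- The `i`-th largest value (0-based) of a tuple of naturals. -/
noncomputable def sortedDesc {N : ℕ} (f : Fin N → ℕ) : Fin N → ℕ :=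
  fun i => (f ∘ Tuple.sort f) i.rev

/-! Let `N` be the vertex–clique incidence matrix. Two distinct cliques of a clique partition share
at most one vertex (two common vertices would span an edge lying in both), so `Nᴴ N = D + A`, where
`A` is the adjacency matrix of `P_G` and `D = diag |C_j|`. Hence `s₁ I + A = Nᴴ N + (s₁ I - D)` is
positive semidefinite and every eigenvalue of `A` is at least `-s₁`. In the uniform case
`s₁ I + A = Nᴴ N` has rank at most `n < k`, so it is singular and `-s₁` is an eigenvalue. -/

namespace Matrix

theorem not_isUnit_mul_of_card_lt {m k R : Type*} [Fintype m] [Fintype k] [DecidableEq k]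
    [CommRing R] [StrongRankCondition R] (B : Matrix k m R) (C : Matrix m k R)
    (h : Fintype.card m < Fintype.card k) : ¬IsUnit (B * C) := fun hu => by
  have := (B * C).rank_of_isUnit hu
  have := (B.rank_mul_le_right C).trans C.rank_le_card_height
  omega

variable {m : Type*} [Fintype m] [DecidableEq m] {A : Matrix m m ℝ}

theorem IsHermitian.neg_le_eigenvalues (hA : A.IsHermitian) {c : ℝ}
    (h : (algebraMap ℝ _ c + A).PosSemidef) (i : m) : -c ≤ hA.eigenvalues i := by
  have hmem := spectrum.add_mem_add_iff (s := c) |>.mpr (hA.eigenvalues_mem_spectrum_real i)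
  obtain ⟨j, hj⟩ : hA.eigenvalues i + c ∈ Set.range h.1.eigenvalues := by
    rwa [← h.1.spectrum_real_eq_range_eigenvalues]
  linarith [h.eigenvalues_nonneg j]

theorem IsHermitian.neg_mem_range_eigenvalues (hA : A.IsHermitian) {c : ℝ}
    (h : ¬IsUnit (algebraMap ℝ _ c + A)) : -c ∈ Set.range hA.eigenvalues := by
  rw [← hA.spectrum_real_eq_range_eigenvalues, ← spectrum.add_mem_add_iff (s := c),
    neg_add_cancel]
  exact spectrum.zero_mem ℝ h

end Matrix

theorem isLeast_eigsDesc {N : ℕ} (hN : 0 < N) {A : Matrix (Fin N) (Fin N) ℝ}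
    (hA : A.IsHermitian) :
    IsLeast (Set.range hA.eigenvalues) (eigsDesc A ⟨N - 1, Nat.sub_one_lt_of_lt hN⟩) := by
  have hlast : eigsDesc A ⟨N - 1, Nat.sub_one_lt_of_lt hN⟩
      = hA.eigenvalues (Tuple.sort hA.eigenvalues ⟨0, hN⟩) := by
    simp only [eigsDesc, dif_pos hA, Function.comp_apply]
    congr
    ext
    simp only [Fin.val_rev]
    omega
  refine ⟨⟨_, hlast.symm⟩, ?_⟩
  rintro _ ⟨i, rfl⟩
  rw [hlast]
  simpa using Tuple.monotone_sort hA.eigenvalues (Fin.mk_le_of_le_val (Nat.zero_le _) :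
    ⟨0, hN⟩ ≤ (Tuple.sort hA.eigenvalues).symm i)

section CliquePartition

variable {n k : ℕ} {G : SimpleGraph (Fin n)} {F : Fin k → Finset (Fin n)}

theorem pgMat_isHermitian (F : Fin k → Finset (Fin n)) : (pgMat F).IsHermitian := by
  ext j l
  simp only [conjTranspose_apply, pgMat, star_trivial, ne_comm (a := l), inter_comm (F l)]

theorem IsCliquePartition.card_inter_le_one (hF : IsCliquePartition G F) {j l : Fin k}
    (hjl : j ≠ l) : #(F j ∩ F l) ≤ 1 := by
  refine card_le_one.mpr fun u hu v hv => by_contra fun huv => hjl ?_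
  rw [mem_inter] at hu hv
  obtain ⟨_, -, huniq⟩ := hF.2 (hF.1 j hu.1 hv.1 huv)
  exact (huniq j ⟨hu.1, hv.1⟩).trans (huniq l ⟨hu.2, hv.2⟩).symm

theorem conjTranspose_vcMat_mul_vcMat_apply (F : Fin k → Finset (Fin n)) (j l : Fin k) :
    ((vcMat F)ᴴ * vcMat F) j l = #(F j ∩ F l) := by
  simp only [mul_apply, conjTranspose_apply, vcMat, star_trivial, mul_ite, mul_one, mul_zero,
    ← ite_and, ← mem_inter, sum_boole, filter_mem_eq_inter, univ_inter, inter_comm]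

theorem IsCliquePartition.conjTranspose_vcMat_mul_vcMat (hF : IsCliquePartition G F) :
    (vcMat F)ᴴ * vcMat F = diagonal (fun j => (#(F j) : ℝ)) + pgMat F := by
  ext j l
  rw [conjTranspose_vcMat_mul_vcMat_apply, Matrix.add_apply]
  rcases eq_or_ne j l with rfl | hjl
  · simp [pgMat]
  · rw [diagonal_apply_ne _ hjl, zero_add, pgMat, if_congr (and_iff_right hjl) rfl rfl]
    rcases (F j ∩ F l).eq_empty_or_nonempty with h | h
    · simp [h]
    · rw [if_pos h, le_antisymm (hF.card_inter_le_one hjl) h.card_pos, Nat.cast_one]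

theorem IsCliquePartition.posSemidef_algebraMap_add_pgMat (hF : IsCliquePartition G F) {s : ℕ}
    (hs : ∀ j, #(F j) ≤ s) : (algebraMap ℝ _ (s : ℝ) + pgMat F).PosSemidef := by
  have hsplit : algebraMap ℝ _ (s : ℝ) + pgMat F
      = (vcMat F)ᴴ * vcMat F + diagonal (fun j => (s : ℝ) - #(F j)) := by
    rw [hF.conjTranspose_vcMat_mul_vcMat, add_right_comm, diagonal_add, algebraMap_eq_diagonal]
    congr 2
    ext j
    simp
  rw [hsplit]
  exact (posSemidef_conjTranspose_mul_self _).add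
    (PosSemidef.diagonal fun j => sub_nonneg.mpr (Nat.cast_le.mpr (hs j)))

theorem IsCliquePartition.algebraMap_add_pgMat_of_card_eq (hF : IsCliquePartition G F) {s : ℕ}
    (hs : ∀ j, #(F j) = s) : algebraMap ℝ _ (s : ℝ) + pgMat F = (vcMat F)ᴴ * vcMat F := by
  simp only [hF.conjTranspose_vcMat_mul_vcMat, hs, algebraMap_eq_diagonal, Pi.algebraMap_def,
    Algebra.algebraMap_self, RingHom.id_apply]

end CliquePartition

theorem stmt_10 {n k : ℕ} (hk : 0 < k) (G : SimpleGraph (Fin n))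
    (F : Fin k → Finset (Fin n)) (hF : IsCliquePartition G F) :
    (-((Finset.univ.sup (fun j => (F j).card) : ℕ) : ℝ) ≤ eigsDesc (pgMat F) ⟨k - 1, by omega⟩) ∧
    ((∀ j, (F j).card = Finset.univ.sup (fun j => (F j).card)) → n < k →
      eigsDesc (pgMat F) ⟨k - 1, by omega⟩ = -((Finset.univ.sup (fun j => (F j).card) : ℕ) : ℝ)) := by
  set s := univ.sup fun j => #(F j)
  have hA := pgMat_isHermitian F
  have hleast := isLeast_eigsDesc hk hA
  have hcard : ∀ j, #(F j) ≤ s := fun j => le_sup (f := fun j => #(F j)) (mem_univ j)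
  have hlower : -(s : ℝ) ∈ lowerBounds (Set.range hA.eigenvalues) := by
    rintro _ ⟨i, rfl⟩
    exact hA.neg_le_eigenvalues (hF.posSemidef_algebraMap_add_pgMat hcard) i
  refine ⟨hlower hleast.1, fun huni hnk => le_antisymm (hleast.2 ?_) (hlower hleast.1)⟩
  apply hA.neg_mem_range_eigenvalues
  rw [hF.algebraMap_add_pgMat_of_card_eq huni]
  exact not_isUnit_mul_of_card_lt _ _ (by simpa using hnk)
end

section
/- Let G be a simple graph on n vertices that is clique-regular with respect to a clique partition F (every vertex lies in the same number t of cliques of F), and let Q_F = M_F M_F^T. Then the Consonni–Todeschini energy of Q_F equals the adjacency energy of G: Σ_{i=1}^n |λ_i(Q_F) − (Σ_{j=1}^n t_j^F)/n| = Σ_{i=1}^n |λ_i(G)|. -/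
/-! Since every edge lies in exactly one clique of `F`, the off-diagonal entries of
`Q_F = M_F M_Fᵀ` are those of `A(G)`, while its diagonal records the clique-degrees. Under
clique-regularity this gives `Q_F = A(G) + t I`, and `t` is also the mean clique-degree, so the
shifted spectrum of `Q_F` is exactly the spectrum of `A(G)`. -/

open Matrix Finset

open Polynomial in
theorem Matrix.charpoly_add_scalar {m R : Type*} [Fintype m] [DecidableEq m] [CommRing R]
    (M : Matrix m m R) (c : R) : (M + scalar m c).charpoly = M.charpoly.comp (X - C c) := by
  simpa [sub_eq_add_neg] using M.charpoly_sub_scalar (-c)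

open Polynomial in
theorem Matrix.IsHermitian.sum_eigenvalues_add_scalar {m : Type*} [Fintype m] [DecidableEq m]
    {A : Matrix m m ℝ} (hA : A.IsHermitian) (c : ℝ) (hAc : (A + scalar m c).IsHermitian)
    (f : ℝ → ℝ) : ∑ i, f (hAc.eigenvalues i) = ∑ i, f (hA.eigenvalues i + c) := by
  have hroots : univ.val.map hAc.eigenvalues = univ.val.map (hA.eigenvalues · + c) := by
    have h := hAc.roots_charpoly_eq_eigenvalues
    rw [charpoly_add_scalar, hA.charpoly_eq, Polynomial.prod_comp] at h
    simp only [sub_comp, X_comp, C_comp, sub_sub, ← C_add] at h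
    rw [roots_prod _ _ (prod_ne_zero_iff.2 fun _ _ => X_sub_C_ne_zero _)] at h
    simp only [roots_X_sub_C, Multiset.bind_singleton, RCLike.ofReal_real_eq_id,
      Function.id_comp, add_comm c] at h
    exact h.symm
  simpa [Function.comp_def] using congrArg (fun s => (s.map f).sum) hroots

theorem sum_eigsDesc {N : ℕ} {B : Matrix (Fin N) (Fin N) ℝ} (hB : B.IsHermitian) (f : ℝ → ℝ) :
    ∑ i, f (eigsDesc B i) = ∑ i, f (hB.eigenvalues i) := by
  simp only [eigsDesc, dif_pos hB, Function.comp_apply]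
  exact Fintype.sum_equiv (Fin.revPerm.trans (Tuple.sort hB.eigenvalues)) _ _ fun _ => rfl

theorem vcMat_mul_transpose_apply {n k : ℕ} (F : Fin k → Finset (Fin n)) (i j : Fin n) :
    (vcMat F * (vcMat F)ᵀ) i j = #{l | i ∈ F l ∧ j ∈ F l} := by
  simp only [mul_apply, transpose_apply, vcMat, mul_ite, mul_one, mul_zero, ← ite_and]
  rw [sum_boole]
  simp only [and_comm]

section CliquePartition

variable {n k : ℕ} {G : SimpleGraph (Fin n)} [DecidableRel G.Adj] {F : Fin k → Finset (Fin n)}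

theorem IsCliquePartition.card_filter_mem_and_mem (hF : IsCliquePartition G F) {i j : Fin n}
    (hij : i ≠ j) : #{l | i ∈ F l ∧ j ∈ F l} = if G.Adj i j then 1 else 0 := by
  split_ifs with hadj
  · obtain ⟨l, hl, huniq⟩ := hF.2 hadj
    exact card_eq_one.2 ⟨l, by ext; simpa using ⟨huniq _, fun h => h ▸ hl⟩⟩
  · exact card_eq_zero.2 <| filter_eq_empty_iff.2 fun l _ ⟨hi, hj⟩ => hadj (hF.1 l hi hj hij)

theorem IsCliquePartition.vcMat_mul_transpose (hF : IsCliquePartition G F) :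
    vcMat F * (vcMat F)ᵀ = G.adjMatrix ℝ + diagonal (fun i => (cliqueDeg F i : ℝ)) := by
  ext i j
  rw [vcMat_mul_transpose_apply]
  obtain rfl | hij := eq_or_ne i j
  · simp [cliqueDeg]
  · simp [hF.card_filter_mem_and_mem hij, hij]

end CliquePartition

theorem stmt_12 {n k t : ℕ} (G : SimpleGraph (Fin n)) [DecidableRel G.Adj]
    (F : Fin k → Finset (Fin n)) (hF : IsCliquePartition G F)
    (ht : ∀ v, cliqueDeg F v = t) :
    ∑ i : Fin n, |eigsDesc (vcMat F * (vcMat F)ᵀ) i - (∑ j : Fin n, (cliqueDeg F j : ℝ)) / n| =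
      ∑ i : Fin n, |eigsDesc (G.adjMatrix ℝ) i| := by
  obtain rfl | hn := n.eq_zero_or_pos
  · simp
  have hQ : vcMat F * (vcMat F)ᵀ = G.adjMatrix ℝ + scalar (Fin n) (t : ℝ) := by
    rw [hF.vcMat_mul_transpose, scalar_apply]
    simp only [ht]
  have hmean : (∑ j : Fin n, (cliqueDeg F j : ℝ)) / n = t := by
    simp [ht, hn.ne']
  have hA : (G.adjMatrix ℝ).IsHermitian := G.isHermitian_adjMatrix ℝ
  have hAt : (G.adjMatrix ℝ + scalar (Fin n) (t : ℝ)).IsHermitian :=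
    hA.add (isHermitian_diagonal _)
  rw [hQ, hmean, sum_eigsDesc hAt (|· - t|), sum_eigsDesc hA (|·|),
    hA.sum_eigenvalues_add_scalar _ hAt (|· - t|)]
  simp
end
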